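/- Let H₁ and H₂ be d×d Hermitian matrices and t ∈ ℝ. Then ‖e^{−iH₁t} e^{−iH₂t} − e^{−i(H₁+H₂)t}‖ ≤ (t²/2)·‖[H₁, H₂]‖, where [H₁,H₂] = H₁H₂ − H₂H₁ and ‖·‖ is the operator norm. -/

import Mathlib

/-!
Duhamel's formula
`F t - exp (t • C) * F 0 = ∫ s in 0..t, exp ((t - s) • C) * (F' s - C * F s)`
writes both `exp (s • A) * B - B * exp (s • A)` and
`exp (t • A) * exp (t • B) - exp (t • (A + B))` as integrals of a commutator sandwiched between
exponentials. When these exponentials are contractions, the first integral is at most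
`s * ‖A * B - B * A‖`, and feeding this into the second gives `t ^ 2 / 2 * ‖A * B - B * A‖`.
For Hermitian `H`, the matrix `-(i t) • H` is skew-adjoint in the C⋆-algebra of matrices with the
operator norm, so its exponentials are unitary.
-/

open scoped Matrix.Norms.L2Operator

open NormedSpace

theorem norm_mul_mul_le_of_norm_le_one {R : Type*} [NonUnitalSeminormedRing R] {x z : R}
    (hx : ‖x‖ ≤ 1) (hz : ‖z‖ ≤ 1) (y : R) : ‖x * (y * z)‖ ≤ ‖y‖ :=
  calc ‖x * (y * z)‖ ≤ ‖x‖ * (‖y‖ * ‖z‖) :=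
        (norm_mul_le _ _).trans (by gcongr; exact norm_mul_le _ _)
    _ ≤ 1 * (‖y‖ * 1) := by gcongr
    _ = ‖y‖ := by ring

section BanachAlgebra

variable {𝔸 : Type*} [NormedRing 𝔸] [NormedAlgebra ℝ 𝔸] [CompleteSpace 𝔸]

theorem continuous_exp_smul_const (A : 𝔸) : Continuous fun s : ℝ => exp (s • A) :=
  continuous_iff_continuousAt.2 fun s => (hasDerivAt_exp_smul_const (𝕂 := ℝ) A s).continuousAt

theorem sub_exp_smul_mul_eq_integral (C : 𝔸) {F F' : ℝ → 𝔸}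
    (hF : ∀ s, HasDerivAt F (F' s) s) (hF' : Continuous F') (t : ℝ) :
    F t - exp (t • C) * F 0 = ∫ s in (0 : ℝ)..t, exp ((t - s) • C) * (F' s - C * F s) := by
  have hderiv : ∀ s, HasDerivAt (fun s => exp ((t - s) • C) * F s)
      (exp ((t - s) • C) * (F' s - C * F s)) s := by
    intro s
    have hE := (hasDerivAt_exp_smul_const (𝕂 := ℝ) C (t - s)).scomp s
      ((hasDerivAt_id s).const_sub t)
    refine (hE.mul (hF s)).congr_deriv ?_
    simp only [Function.comp_apply, neg_one_smul]
    noncomm_ring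
  have hcont : Continuous fun s => exp ((t - s) • C) * (F' s - C * F s) :=
    ((continuous_exp_smul_const C).comp (continuous_const.sub continuous_id)).mul
      (hF'.sub (continuous_const.mul (continuous_iff_continuousAt.2 (hF · |>.continuousAt))))
  rw [intervalIntegral.integral_eq_sub_of_hasDerivAt (fun s _ => hderiv s)
    (hcont.intervalIntegrable 0 t)]
  simp

theorem exp_smul_mul_sub_mul_exp_smul_eq_integral (A B : 𝔸) (s : ℝ) :
    exp (s • A) * B - B * exp (s • A) =
      ∫ u in (0 : ℝ)..s, exp ((s - u) • A) * ((A * B - B * A) * exp (u • A)) := by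
  have hF (u : ℝ) : HasDerivAt (fun u : ℝ => B * exp (u • A)) (B * (exp (u • A) * A)) u :=
    (hasDerivAt_exp_smul_const A u).const_mul B
  have hF' : Continuous fun u : ℝ => B * (exp (u • A) * A) :=
    continuous_const.mul ((continuous_exp_smul_const A).mul continuous_const)
  have duhamel := sub_exp_smul_mul_eq_integral A hF hF' s
  simp only [zero_smul, exp_zero, mul_one] at duhamel
  rw [← neg_sub, duhamel, ← intervalIntegral.integral_neg]
  congr with u
  rw [← ((Commute.refl A).smul_right u).exp_right.eq]
  noncomm_ring

theorem exp_smul_mul_exp_smul_sub_exp_smul_add_eq_integral (A B : 𝔸) (t : ℝ) :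
    exp (t • A) * exp (t • B) - exp (t • (A + B)) =
      ∫ s in (0 : ℝ)..t,
        exp ((t - s) • (A + B)) * ((exp (s • A) * B - B * exp (s • A)) * exp (s • B)) := by
  have hF (s : ℝ) : HasDerivAt (fun s : ℝ => exp (s • A) * exp (s • B))
      (exp (s • A) * A * exp (s • B) + exp (s • A) * (exp (s • B) * B)) s :=
    (hasDerivAt_exp_smul_const A s).mul (hasDerivAt_exp_smul_const B s)
  have hF' : Continuous fun s : ℝ =>
      exp (s • A) * A * exp (s • B) + exp (s • A) * (exp (s • B) * B) := by
    have := continuous_exp_smul_const A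
    have := continuous_exp_smul_const B
    fun_prop
  have duhamel := sub_exp_smul_mul_eq_integral (A + B) hF hF' t
  simp only [zero_smul, exp_zero, mul_one] at duhamel
  rw [duhamel]
  congr with s
  rw [← ((Commute.refl A).smul_right s).exp_right.eq,
    ← ((Commute.refl B).smul_right s).exp_right.eq]
  noncomm_ring

theorem norm_exp_smul_mul_sub_mul_exp_smul_le {A : 𝔸}
    (hA : ∀ s : ℝ, 0 ≤ s → ‖exp (s • A)‖ ≤ 1) (B : 𝔸) {s : ℝ} (hs : 0 ≤ s) :
    ‖exp (s • A) * B - B * exp (s • A)‖ ≤ s * ‖A * B - B * A‖ := by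
  rw [exp_smul_mul_sub_mul_exp_smul_eq_integral]
  calc _ ≤ ‖A * B - B * A‖ * |s - 0| :=
        intervalIntegral.norm_integral_le_of_norm_le_const fun u hu => ?_
    _ = s * ‖A * B - B * A‖ := by rw [sub_zero, abs_of_nonneg hs, mul_comm]
  rw [Set.uIoc_of_le hs] at hu
  exact norm_mul_mul_le_of_norm_le_one (hA _ (sub_nonneg.2 hu.2)) (hA _ hu.1.le) _

theorem norm_exp_smul_mul_exp_smul_sub_exp_smul_add_le {A B : 𝔸}
    (hA : ∀ s : ℝ, 0 ≤ s → ‖exp (s • A)‖ ≤ 1) (hB : ∀ s : ℝ, 0 ≤ s → ‖exp (s • B)‖ ≤ 1)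
    (hAB : ∀ s : ℝ, 0 ≤ s → ‖exp (s • (A + B))‖ ≤ 1) {t : ℝ} (ht : 0 ≤ t) :
    ‖exp (t • A) * exp (t • B) - exp (t • (A + B))‖ ≤ t ^ 2 / 2 * ‖A * B - B * A‖ := by
  rw [exp_smul_mul_exp_smul_sub_exp_smul_add_eq_integral]
  calc _ ≤ ∫ s in (0 : ℝ)..t, s * ‖A * B - B * A‖ :=
        intervalIntegral.norm_integral_le_of_norm_le ht (.of_forall fun s hs => ?_)
          ((continuous_id.mul continuous_const).intervalIntegrable 0 t)
    _ = t ^ 2 / 2 * ‖A * B - B * A‖ := by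
      rw [intervalIntegral.integral_mul_const, integral_id]; ring
  exact (norm_mul_mul_le_of_norm_le_one (hAB _ (sub_nonneg.2 hs.2)) (hB _ hs.1.le) _).trans
    (norm_exp_smul_mul_sub_mul_exp_smul_le hA B hs.1.le)

end BanachAlgebra

section CStarAlgebra

variable {A : Type*} [CStarAlgebra A]

theorem norm_exp_le_one_of_mem_skewAdjoint {a : A} (ha : a ∈ skewAdjoint A) : ‖exp a‖ ≤ 1 := by
  let : NormedAlgebra ℚ A := .restrictScalars ℚ ℂ A
  rcases subsingleton_or_nontrivial A with hA | hA
  · simp [Subsingleton.elim (exp a) 0]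
  · exact (CStarRing.norm_of_mem_unitary (exp_mem_unitary_of_mem_skewAdjoint ha)).le

theorem norm_exp_mul_exp_sub_exp_add_le {a b : A} (ha : a ∈ skewAdjoint A)
    (hb : b ∈ skewAdjoint A) : ‖exp a * exp b - exp (a + b)‖ ≤ ‖a * b - b * a‖ / 2 := by
  have contraction {c : A} (hc : c ∈ skewAdjoint A) (s : ℝ) (_ : 0 ≤ s) : ‖exp (s • c)‖ ≤ 1 :=
    norm_exp_le_one_of_mem_skewAdjoint (skewAdjoint.smul_mem s hc)
  simpa [div_eq_inv_mul] using norm_exp_smul_mul_exp_smul_sub_exp_smul_add_le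
    (contraction ha) (contraction hb) (contraction (add_mem ha hb)) zero_le_one

end CStarAlgebra

/-- first-order Trotter commutator error bound. -/
theorem trotter_commutator_bound {d : ℕ} (H1 H2 : Matrix (Fin d) (Fin d) ℂ)
    (h1 : H1.IsHermitian) (h2 : H2.IsHermitian) (t : ℝ) :
    ‖NormedSpace.exp ((-(Complex.I * t)) • H1) *
        NormedSpace.exp ((-(Complex.I * t)) • H2) -
      NormedSpace.exp ((-(Complex.I * t)) • (H1 + H2))‖ ≤
      t ^ 2 / 2 * ‖H1 * H2 - H2 * H1‖ := by
  set c : ℂ := -(Complex.I * t)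
  have hc : star c = -c := by simp [c]
  have hcomm : c • H1 * (c • H2) - c • H2 * (c • H1) = c ^ 2 • (H1 * H2 - H2 * H1) := by
    simp only [smul_mul_smul, smul_sub, sq]
  have bound := norm_exp_mul_exp_sub_exp_add_le (h1.isSelfAdjoint.smul_mem_skewAdjoint hc)
    (h2.isSelfAdjoint.smul_mem_skewAdjoint hc)
  have hc_norm : ‖c‖ ^ 2 = t ^ 2 := by simp [c]
  rwa [← smul_add, hcomm, norm_smul, norm_pow, hc_norm, mul_div_right_comm] at bound
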